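/- arXiv:1902.01489 — 3 statements merged into one kernel-verified Lean document; each statement's English description precedes it below -/
import Mathlib

section
/- Let g be a nilpotent Lie algebra with nilindex p, and let f : 𝒳 × 𝒲 → 𝒳 belong to class-𝒜 with linear part A, such that (i) for every W ∈ 𝒲, f(X,W) = 0 if and only if X = 0, and (ii) for every i ≥ 1 the subspace (g^(i))^n ⊆ 𝒳 is invariant under f (equivalently, under A). If the exogenous signal W is bounded (there exists β ≥ 0 with ‖W[k]‖ ≤ β for all k ≥ 0) and A is Schur (ρ(A) < 1), then the origin of 𝒳 is semiglobally exponentially stable for the system X[k+1] = f(X[k],W[k]). -/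
/-!
Write `V i = (g^(i+1))^n ⊆ 𝒳`, i.e. `lcsPi B n i`; these subspaces decrease from `V 0 = 𝒳` to
`V p = 0` and are invariant under `A`. The nonlinear part `N` of `f` is Lipschitz modulo the
filtration: if every letter `X_j` lies within `D` of `g^(i+1)`, then every word of length at least
two moves by at most a multiple of `D` modulo `g^(i+2)` when the `X` letters are set to `0`, and the
words in the `W` letters alone add up to `f(0, W) - A 0 = 0`. The multiple depends on bounds for `D`
and `‖W‖`, which is why the result is only semiglobal. Hence, if the distance of a trajectory to
`V i` decays geometrically, then modulo `V (i + 1)` the trajectory obeys `X[k+1] = A X[k] + e[k]`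
with a geometrically decaying input `e`; as `‖A^k‖ ≤ C λ^k` with `λ < 1`, the distance to
`V (i + 1)` decays geometrically as well. At `i = p` this distance is the norm.
-/

open scoped BigOperators

/-- Words of length at least `2` over `m` letters. -/
def Word (m : ℕ) : Type := {l : List (Fin m) // 2 ≤ l.length}

section bracket

variable {g : Type*} [AddCommGroup g] [Module ℝ g]

/-- Right-nested evaluation `[Y ω₁, [Y ω₂, [… , Y ω_{|ω|}]⋯]]` of a word with respect to a
bilinear bracket `B`. -/
def wordEval (B : g →ₗ[ℝ] g →ₗ[ℝ] g) {m : ℕ} (Y : Fin m → g) : List (Fin m) → g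
  | [] => 0
  | [i] => Y i
  | i :: j :: l => B (Y i) (wordEval B Y (j :: l))

/-- The `j`-th letter: `X j` for `j < n`, and `W (j - n)` otherwise. -/
def letter {n r : ℕ} (X : Fin n → g) (W : Fin r → g) (j : Fin (n + r)) : g :=
  if h : (j : ℕ) < n then X ⟨j, h⟩ else W ⟨(j : ℕ) - n, by have := j.isLt; omega⟩

/-- Bracket of two submodules: the span of the pairwise brackets. -/
def bSpan (B : g →ₗ[ℝ] g →ₗ[ℝ] g) (S T : Submodule ℝ g) : Submodule ℝ g :=
  Submodule.span ℝ {z | ∃ x ∈ S, ∃ y ∈ T, z = B x y}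

/-- `lcs B h i` is the `(i+1)`-st term `h^(i+1)` of the lower central series of `h`:
`h^(1) = h`, `h^(i+1) = [h^(i), h]`. -/
def lcs (B : g →ₗ[ℝ] g →ₗ[ℝ] g) (h : Submodule ℝ g) : ℕ → Submodule ℝ g
  | 0 => h
  | i + 1 => bSpan B (lcs B h i) h

/-- The derived series of `g` with respect to the bracket `B`. -/
def derSeries (B : g →ₗ[ℝ] g →ₗ[ℝ] g) : ℕ → Submodule ℝ g
  | 0 => ⊤
  | i + 1 => bSpan B (derSeries B i) (derSeries B i)

end bracket

/-- The product norm `‖(Z₁, …, Z_m)‖ = Σ_i ‖Z_i‖`. -/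
noncomputable def pnorm {g : Type*} [NormedAddCommGroup g] {m : ℕ} (X : Fin m → g) : ℝ :=
  ∑ i, ‖X i‖

/-- The spectral radius of a (continuous) linear endomorphism, via Gelfand's formula. -/
noncomputable def specRad {E : Type*} [NormedAddCommGroup E] [NormedSpace ℝ E]
    (A : E →L[ℝ] E) : ℝ :=
  Filter.limsup (fun k : ℕ => ‖A ^ k‖ ^ (1 / (k : ℝ))) Filter.atTop

open Metric Filter

section LowerCentralSeries

variable {g : Type*} [AddCommGroup g] [Module ℝ g] {B : g →ₗ[ℝ] g →ₗ[ℝ] g}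

lemma bracket_mem_lcs_succ_left {i : ℕ} {x : g} (hx : x ∈ lcs B ⊤ i) (y : g) :
    B x y ∈ lcs B ⊤ (i + 1) :=
  Submodule.subset_span ⟨x, hx, y, Submodule.mem_top, rfl⟩

lemma bracket_mem_lcs_succ_right (hB : B.IsAlt) {i : ℕ} (x : g) {y : g} (hy : y ∈ lcs B ⊤ i) :
    B x y ∈ lcs B ⊤ (i + 1) := by
  rw [← hB.neg y x]
  exact neg_mem (bracket_mem_lcs_succ_left hy x)

lemma lcs_top_antitone : Antitone (lcs B ⊤) := by
  refine antitone_nat_of_succ_le fun i => ?_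
  induction i with
  | zero => exact le_top
  | succ i ih =>
    refine Submodule.span_le.mpr ?_
    rintro _ ⟨x, hx, y, -, rfl⟩
    exact bracket_mem_lcs_succ_left (ih hx) y

variable {m : ℕ} (Y : Fin m → g)

lemma wordEval_mem_lcs_length (hB : B.IsAlt) : ∀ l : List (Fin m),
    wordEval B Y l ∈ lcs B ⊤ (l.length - 1)
  | [] => zero_mem _
  | [_] => Submodule.mem_top
  | a :: b :: l => bracket_mem_lcs_succ_right hB (Y a) (wordEval_mem_lcs_length hB (b :: l))

lemma wordEval_mem_lcs_of_forall {i : ℕ} (hY : ∀ a, Y a ∈ lcs B ⊤ i) : ∀ l : List (Fin m),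
    wordEval B Y l ∈ lcs B ⊤ i
  | [] => zero_mem _
  | [a] => hY a
  | a :: _ :: _ => lcs_top_antitone (Nat.le_succ i) (bracket_mem_lcs_succ_left (hY a) _)

lemma wordEval_eq_zero_of_lt_length (hB : B.IsAlt) {p : ℕ} (hp : lcs B ⊤ p = ⊥)
    {l : List (Fin m)} (hl : p < l.length) : wordEval B Y l = 0 := by
  have h := lcs_top_antitone (by omega : p ≤ l.length - 1) (wordEval_mem_lcs_length Y hB l)
  rwa [hp, Submodule.mem_bot] at h

end LowerCentralSeries

section InfDist

variable {E F : Type*} [SeminormedAddCommGroup E] [SeminormedAddCommGroup F]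

lemma infDist_add_le (S : AddSubgroup E) (x y : E) :
    infDist (x + y) S ≤ infDist x S + infDist y S := by
  simpa only [← QuotientAddGroup.norm_mk, QuotientAddGroup.mk_add] using norm_add_le _ _

lemma infDist_sum_le {ι : Type*} (S : AddSubgroup E) (s : Finset ι) (x : ι → E) :
    infDist (∑ i ∈ s, x i) S ≤ ∑ i ∈ s, infDist (x i) S := by
  simpa only [← QuotientAddGroup.norm_mk, ← QuotientAddGroup.mk'_apply, map_sum]
    using norm_sum_le s fun i => QuotientAddGroup.mk' S (x i)

lemma infDist_le_norm (S : AddSubgroup E) (x : E) : infDist x S ≤ ‖x‖ := by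
  simpa using infDist_le_dist_of_mem (x := x) S.zero_mem

variable [NormedSpace ℝ E] [NormedSpace ℝ F]

lemma infDist_map_le (T : E →ₗ[ℝ] F) {S : Submodule ℝ E} {S' : Submodule ℝ F}
    (hS : S ≤ S'.comap T) {C : ℝ} (hC : 0 ≤ C) (hT : ∀ v, ‖T v‖ ≤ C * ‖v‖) (x : E) :
    infDist (T x) S' ≤ C * infDist x S := by
  have : Nonempty S := ⟨0⟩
  rw [infDist_eq_iInf (s := (S : Set E)), Real.mul_iInf_of_nonneg hC]
  refine le_ciInf fun ⟨s, hs⟩ => ?_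
  calc infDist (T x) S' ≤ dist (T x) (T s) := infDist_le_dist_of_mem (hS hs)
    _ = ‖T (x - s)‖ := by rw [dist_eq_norm, map_sub]
    _ ≤ C * dist x s := by rw [dist_eq_norm]; exact hT _

lemma infDist_apply_le {ι : Type*} [Fintype ι] (S : Submodule ℝ E) (x : ι → E) (j : ι) :
    infDist (x j) S ≤ infDist x (Submodule.pi Set.univ fun _ : ι => S : Submodule ℝ (ι → E)) := by
  have hS : (Submodule.pi Set.univ fun _ : ι => S) ≤ S.comap (LinearMap.proj j) :=
    fun v hv => Submodule.mem_pi.mp hv j trivial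
  simpa using infDist_map_le (LinearMap.proj j) hS zero_le_one
    (fun v => by simpa using norm_le_pi_norm v j) x

end InfDist

lemma exists_norm_pow_le_of_specRad_lt_one {E : Type*} [NormedAddCommGroup E] [NormedSpace ℝ E]
    (A : E →L[ℝ] E) (hρ : specRad A < 1) :
    ∃ C, 0 ≤ C ∧ ∃ lam : ℝ, 0 ≤ lam ∧ lam < 1 ∧ ∀ k, ‖A ^ k‖ ≤ C * lam ^ k := by
  set b := (max (specRad A) 0 + 1) / 2 with hb
  have hb0 : 0 < b := by positivity
  have hb1 : b < 1 := by linarith [max_lt hρ one_pos]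
  have hρb : specRad A < b := by linarith [le_max_left (specRad A) 0]
  have hbdd : IsBoundedUnder (· ≤ ·) atTop fun k : ℕ => ‖A ^ k‖ ^ (1 / (k : ℝ)) := by
    refine isBoundedUnder_of_eventually_le (a := ‖A‖) ?_
    filter_upwards [eventually_ge_atTop 1] with k hk
    calc ‖A ^ k‖ ^ (1 / (k : ℝ)) ≤ (‖A‖ ^ k) ^ (1 / (k : ℝ)) :=
          Real.rpow_le_rpow (norm_nonneg _) (norm_pow_le' A hk) (by positivity)
      _ = ‖A‖ := by rw [one_div, Real.pow_rpow_inv_natCast (norm_nonneg _) (by omega)]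
  have hev : ∀ᶠ k : ℕ in atTop, ‖A ^ k‖ ≤ b ^ k := by
    filter_upwards [eventually_lt_of_limsup_lt hρb hbdd, eventually_ge_atTop 1] with k hk hk1
    calc ‖A ^ k‖ = (‖A ^ k‖ ^ (1 / (k : ℝ))) ^ k := by
          rw [one_div, Real.rpow_inv_natCast_pow (norm_nonneg _) (by omega)]
      _ ≤ b ^ k := pow_le_pow_left₀ (by positivity) hk.le k
  have hO : (fun k => ‖A ^ k‖) =O[atTop] fun k => b ^ k :=
    Asymptotics.IsBigO.of_bound' (hev.mono fun k hk => by
      simpa [abs_of_pos hb0] using hk)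
  obtain ⟨C, hC, hCb⟩ := Asymptotics.bound_of_isBigO_nat_atTop hO
  refine ⟨C, hC.le, b, hb0.le, hb1, fun k => ?_⟩
  simpa [abs_of_pos hb0] using hCb (pow_ne_zero k hb0.ne')

lemma sum_pow_mul_pow_le {lam ν ρ : ℝ} (hlam : 0 ≤ lam) (hν : 0 ≤ ν) (hlamρ : lam ≤ ρ)
    (hνρ : ν < ρ) (k : ℕ) :
    ∑ m ∈ Finset.range k, lam ^ m * ν ^ (k - 1 - m) ≤ ρ ^ k / (ρ - ν) := by
  have hρν : 0 < ρ - ν := sub_pos.mpr hνρ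
  calc ∑ m ∈ Finset.range k, lam ^ m * ν ^ (k - 1 - m)
      ≤ ∑ m ∈ Finset.range k, ρ ^ m * ν ^ (k - 1 - m) := by
        gcongr
    _ = (ρ ^ k - ν ^ k) / (ρ - ν) := by rw [eq_div_iff hρν.ne', geom_sum₂_mul]
    _ ≤ ρ ^ k / (ρ - ν) := by gcongr; exact sub_le_self _ (pow_nonneg hν k)

section Iteration

variable {E : Type*} [SeminormedAddCommGroup E] [NormedSpace ℝ E]

lemma eq_pow_apply_add_sum_of_succ (T : E →L[ℝ] E) {x e : ℕ → E}
    (hx : ∀ k, x (k + 1) = T (x k) + e k) :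
    ∀ k, x k = (T ^ k) (x 0) + ∑ m ∈ Finset.range k, (T ^ m) (e (k - 1 - m))
  | 0 => by simp
  | k + 1 => by
    rw [hx, eq_pow_apply_add_sum_of_succ T hx k, Finset.sum_range_succ']
    simp only [map_add, map_sum, pow_succ', mul_apply_eq_comp, pow_zero, one_apply_eq_self,
      Nat.add_sub_cancel, Nat.sub_zero]
    rw [add_assoc]
    congr 2
    exact Finset.sum_congr rfl fun m _ => by rw [Nat.sub_sub, add_comm 1 m]

lemma infDist_le_of_eq_add {T : E →L[ℝ] E} {S : Submodule ℝ E} (hTS : ∀ v ∈ S, T v ∈ S)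
    {C lam K ν ρ : ℝ} (hC : 0 ≤ C) (hlam : 0 ≤ lam) (hK : 0 ≤ K) (hν : 0 ≤ ν)
    (hlamρ : lam ≤ ρ) (hνρ : ν < ρ) (hT : ∀ k, ‖T ^ k‖ ≤ C * lam ^ k)
    {x e : ℕ → E} (hx : ∀ k, x (k + 1) = T (x k) + e k) (he : ∀ k, infDist (e k) S ≤ K * ν ^ k)
    (k : ℕ) : infDist (x k) S ≤ C * (infDist (x 0) S + K / (ρ - ν)) * ρ ^ k := by
  have hpow : ∀ m, S ≤ S.comap (T ^ m : E →L[ℝ] E).toLinearMap := by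
    intro m
    induction m with
    | zero => intro v hv; simpa using hv
    | succ m ih =>
      intro v hv
      show (T ^ (m + 1)) v ∈ S
      rw [pow_succ', mul_apply_eq_comp]
      exact hTS _ (ih hv)
  have hmap : ∀ m v, infDist ((T ^ m) v) S ≤ C * lam ^ m * infDist v S := fun m v =>
    (infDist_map_le _ (hpow m) (norm_nonneg _) (T ^ m).le_opNorm v).trans
      (mul_le_mul_of_nonneg_right (hT m) infDist_nonneg)
  have hρ : 0 ≤ ρ := hlam.trans hlamρ
  rw [eq_pow_apply_add_sum_of_succ T hx k]
  calc infDist ((T ^ k) (x 0) + ∑ m ∈ Finset.range k, (T ^ m) (e (k - 1 - m))) S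
      ≤ C * lam ^ k * infDist (x 0) S
        + ∑ m ∈ Finset.range k, C * lam ^ m * (K * ν ^ (k - 1 - m)) := by
        refine (infDist_add_le S.toAddSubgroup _ _).trans (add_le_add (hmap k _) ?_)
        refine (infDist_sum_le S.toAddSubgroup _ _).trans (Finset.sum_le_sum fun m _ => ?_)
        exact (hmap m _).trans (mul_le_mul_of_nonneg_left (he _) (by positivity))
    _ = C * lam ^ k * infDist (x 0) S
        + C * K * ∑ m ∈ Finset.range k, lam ^ m * ν ^ (k - 1 - m) := by
        rw [Finset.mul_sum]; congr 1; refine Finset.sum_congr rfl fun m _ => by ring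
    _ ≤ C * ρ ^ k * infDist (x 0) S + C * K * (ρ ^ k / (ρ - ν)) := by
        gcongr
        · exact infDist_nonneg
        · exact sum_pow_mul_pow_le hlam hν hlamρ hνρ k
    _ = C * (infDist (x 0) S + K / (ρ - ν)) * ρ ^ k := by ring

end Iteration

theorem exists_infDist_le_geometric {E U : Type*} [NormedAddCommGroup E] [NormedSpace ℝ E]
    [SeminormedAddCommGroup U] {V : ℕ → Submodule ℝ E} (hV0 : V 0 = ⊤) {A : E →L[ℝ] E}
    (hAV : ∀ i, ∀ v ∈ V i, A v ∈ V i) {CA lamA : ℝ} (hCA : 0 ≤ CA) (hlamA : 0 ≤ lamA)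
    (hlamA1 : lamA < 1) (hA : ∀ k, ‖A ^ k‖ ≤ CA * lamA ^ k) {N : E → U → E}
    (hN : ∀ i Q, 0 ≤ Q → ∃ K, 0 ≤ K ∧ ∀ x w D, infDist x (V i) ≤ D → D ≤ Q → ‖w‖ ≤ Q →
      infDist (N x w) (V (i + 1)) ≤ K * D)
    {w : ℕ → U} {β : ℝ} (hw : ∀ k, ‖w k‖ ≤ β) {M : ℝ} (hM : 0 ≤ M) (i : ℕ) :
    ∃ C, 0 ≤ C ∧ ∃ lam : ℝ, 0 ≤ lam ∧ lam < 1 ∧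
      ∀ x : ℕ → E, (∀ k, x (k + 1) = A (x k) + N (x k) (w k)) → ‖x 0‖ ≤ M →
        ∀ k, infDist (x k) (V i) ≤ C * lam ^ k * ‖x 0‖ := by
  induction i with
  | zero =>
    refine ⟨0, le_rfl, 0, le_rfl, one_pos, fun x _ _ k => ?_⟩
    simp [hV0, infDist_zero_of_mem]
  | succ i ih =>
    obtain ⟨Ci, hCi, lami, hlami, hlami1, hxi⟩ := ih
    have hβ : 0 ≤ β := (norm_nonneg _).trans (hw 0)
    obtain ⟨K, hK, hNK⟩ := hN i (Ci * M + β) (by positivity)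
    set ρ := (1 + max lamA lami) / 2 with hρ
    have hlamAρ : lamA ≤ ρ := by linarith [le_max_left lamA lami]
    have hlamiρ : lami < ρ := by linarith [le_max_right lamA lami, max_lt hlamA1 hlami1]
    have hρ1 : ρ < 1 := by linarith [max_lt hlamA1 hlami1]
    have hρlami : 0 < ρ - lami := sub_pos.mpr hlamiρ
    refine ⟨CA * (1 + K * Ci / (ρ - lami)), by positivity, ρ, by positivity, hρ1,
      fun x hx hx0 k => ?_⟩
    have he : ∀ m, infDist (N (x m) (w m)) (V (i + 1)) ≤ K * Ci * ‖x 0‖ * lami ^ m := by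
      intro m
      have hD : Ci * lami ^ m * ‖x 0‖ ≤ Ci * M + β := by
        have : lami ^ m * ‖x 0‖ ≤ 1 * M :=
          mul_le_mul (pow_le_one₀ hlami hlami1.le) hx0 (norm_nonneg _) zero_le_one
        nlinarith
      have hwQ : ‖w m‖ ≤ Ci * M + β := by nlinarith [hw m]
      calc infDist (N (x m) (w m)) (V (i + 1)) ≤ K * (Ci * lami ^ m * ‖x 0‖) :=
            hNK _ _ _ (hxi x hx hx0 m) hD hwQ
        _ = K * Ci * ‖x 0‖ * lami ^ m := by ring
    calc infDist (x k) (V (i + 1))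
        ≤ CA * (infDist (x 0) (V (i + 1)) + K * Ci * ‖x 0‖ / (ρ - lami)) * ρ ^ k :=
          infDist_le_of_eq_add (hAV (i + 1)) hCA hlamA (by positivity) hlami hlamAρ hlamiρ hA hx
            he k
      _ ≤ CA * (‖x 0‖ + K * Ci * ‖x 0‖ / (ρ - lami)) * ρ ^ k := by
          gcongr
          exact infDist_le_norm (V (i + 1)).toAddSubgroup _
      _ = CA * (1 + K * Ci / (ρ - lami)) * ρ ^ k * ‖x 0‖ := by ring

section WordEstimates

variable {g : Type*} [NormedAddCommGroup g] [NormedSpace ℝ g] {B : g →ₗ[ℝ] g →ₗ[ℝ] g} {μ : ℝ}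
  {m : ℕ}

lemma norm_wordEval_le (hμ0 : 0 ≤ μ) (hμ : ∀ x y : g, ‖B x y‖ ≤ μ * ‖x‖ * ‖y‖)
    {Y : Fin m → g} {Q : ℝ} (hQ : 0 ≤ Q) (hY : ∀ a, ‖Y a‖ ≤ Q) :
    ∀ l : List (Fin m), ‖wordEval B Y l‖ ≤ μ ^ (l.length - 1) * Q ^ l.length
  | [] => by simp [wordEval]
  | [a] => by simpa [wordEval] using hY a
  | a :: b :: l => by
    calc ‖wordEval B Y (a :: b :: l)‖ ≤ μ * ‖Y a‖ * ‖wordEval B Y (b :: l)‖ := hμ _ _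
      _ ≤ μ * Q * (μ ^ (b :: l).length.pred * Q ^ (b :: l).length) := by
          gcongr
          exacts [hY a, norm_wordEval_le hμ0 hμ hQ hY (b :: l)]
      _ = μ ^ ((a :: b :: l).length - 1) * Q ^ (a :: b :: l).length := by
          simp only [List.length_cons, Nat.pred_eq_sub_one, Nat.add_sub_cancel, pow_succ]
          ring

variable [FiniteDimensional ℝ g]

lemma infDist_bracket_le (hB : B.IsAlt) (hμ : ∀ x y : g, ‖B x y‖ ≤ μ * ‖x‖ * ‖y‖) (i : ℕ)
    (x y : g) :
    infDist (B x y) (lcs B ⊤ (i + 1)) ≤ μ * infDist x (lcs B ⊤ i) * infDist y (lcs B ⊤ i) := by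
  have hS := Submodule.closed_of_finiteDimensional (lcs B ⊤ i)
  obtain ⟨u, hu, hxu⟩ := hS.exists_infDist_eq_dist ⟨0, zero_mem _⟩ x
  obtain ⟨v, hv, hyv⟩ := hS.exists_infDist_eq_dist ⟨0, zero_mem _⟩ y
  have hmem : B u y + B (x - u) v ∈ lcs B ⊤ (i + 1) :=
    add_mem (bracket_mem_lcs_succ_left hu y) (bracket_mem_lcs_succ_right hB _ hv)
  calc infDist (B x y) (lcs B ⊤ (i + 1)) ≤ dist (B x y) (B u y + B (x - u) v) :=
        infDist_le_dist_of_mem hmem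
    _ = ‖B (x - u) (y - v)‖ := by
        rw [dist_eq_norm]
        congr 1
        simp only [map_sub, LinearMap.sub_apply]
        abel
    _ ≤ μ * ‖x - u‖ * ‖y - v‖ := hμ _ _
    _ = μ * infDist x (lcs B ⊤ i) * infDist y (lcs B ⊤ i) := by
        rw [hxu, hyv, dist_eq_norm, dist_eq_norm]

lemma infDist_wordEval_cons_cons_sub_le_add (hB : B.IsAlt) (hμ0 : 0 ≤ μ)
    (hμ : ∀ x y : g, ‖B x y‖ ≤ μ * ‖x‖ * ‖y‖) {i : ℕ} {Y Y₀ : Fin m → g} {D Q : ℝ} (a b : Fin m)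
    (l : List (Fin m)) (hD : infDist (Y a - Y₀ a) (lcs B ⊤ i) ≤ D) (hQ : ‖Y₀ a‖ ≤ Q) :
    infDist (wordEval B Y (a :: b :: l) - wordEval B Y₀ (a :: b :: l)) (lcs B ⊤ (i + 1)) ≤
      μ * D * ‖wordEval B Y₀ (b :: l)‖ +
        μ * (D + Q) * infDist (wordEval B Y (b :: l) - wordEval B Y₀ (b :: l)) (lcs B ⊤ i) := by
  set x := Y a - Y₀ a
  set P₀ := wordEval B Y₀ (b :: l)
  set δ := wordEval B Y (b :: l) - P₀
  have hsplit : wordEval B Y (a :: b :: l) - wordEval B Y₀ (a :: b :: l) =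
      B x P₀ + B x δ + B (Y₀ a) δ := by
    simp only [wordEval, x, δ, P₀, map_sub, LinearMap.sub_apply]
    abel
  set S := lcs B ⊤ (i + 1)
  have hD0 : 0 ≤ D := infDist_nonneg.trans hD
  have hδ : 0 ≤ infDist δ (lcs B ⊤ i) := infDist_nonneg
  have hy : infDist (Y₀ a) (lcs B ⊤ i) ≤ Q := (infDist_le_norm (lcs B ⊤ i).toAddSubgroup _).trans hQ
  have h₁ : infDist (B x P₀) S ≤ μ * D * ‖P₀‖ :=
    (infDist_bracket_le hB hμ i x P₀).trans <| mul_le_mul (by gcongr)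
      (infDist_le_norm (lcs B ⊤ i).toAddSubgroup _) infDist_nonneg (by positivity)
  have h₂ : infDist (B x δ) S ≤ μ * D * infDist δ (lcs B ⊤ i) :=
    (infDist_bracket_le hB hμ i x δ).trans (by gcongr)
  have h₃ : infDist (B (Y₀ a) δ) S ≤ μ * Q * infDist δ (lcs B ⊤ i) :=
    (infDist_bracket_le hB hμ i _ δ).trans (by gcongr)
  rw [hsplit]
  calc infDist (B x P₀ + B x δ + B (Y₀ a) δ) S
      ≤ infDist (B x P₀) S + infDist (B x δ) S + infDist (B (Y₀ a) δ) S :=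
        (infDist_add_le S.toAddSubgroup _ _).trans
          (add_le_add_left (infDist_add_le S.toAddSubgroup _ _) _)
    _ ≤ μ * D * ‖P₀‖ + μ * D * infDist δ (lcs B ⊤ i) + μ * Q * infDist δ (lcs B ⊤ i) := by
        gcongr
    _ = μ * D * ‖P₀‖ + μ * (D + Q) * infDist δ (lcs B ⊤ i) := by ring

end WordEstimates

section WordDifference

variable {g : Type*} [NormedAddCommGroup g] [NormedSpace ℝ g] [FiniteDimensional ℝ g]
  {B : g →ₗ[ℝ] g →ₗ[ℝ] g} {μ : ℝ} {m : ℕ} {i : ℕ} {Y Y₀ : Fin m → g} {D Q : ℝ}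

lemma infDist_wordEval_cons_cons_sub_le (hB : B.IsAlt) (hμ0 : 0 ≤ μ)
    (hμ : ∀ x y : g, ‖B x y‖ ≤ μ * ‖x‖ * ‖y‖) (hDQ : D ≤ Q)
    (hY : ∀ a, infDist (Y a - Y₀ a) (lcs B ⊤ i) ≤ D) (hY₀ : ∀ a, ‖Y₀ a‖ ≤ Q)
    (a b : Fin m) (l : List (Fin m))
    (htail : infDist (wordEval B Y (b :: l) - wordEval B Y₀ (b :: l)) (lcs B ⊤ i) ≤
      (b :: l).length * (2 * μ * Q) ^ ((b :: l).length - 1) * D) :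
    infDist (wordEval B Y (a :: b :: l) - wordEval B Y₀ (a :: b :: l)) (lcs B ⊤ (i + 1)) ≤
      (a :: b :: l).length * (2 * μ * Q) ^ ((a :: b :: l).length - 1) * D := by
  have hD0 : 0 ≤ D := infDist_nonneg.trans (hY a)
  have hQ0 : 0 ≤ Q := (norm_nonneg _).trans (hY₀ a)
  have hP₀ := norm_wordEval_le hμ0 hμ hQ0 hY₀ (b :: l)
  simp only [List.length_cons, Nat.add_sub_cancel] at htail hP₀ ⊢
  set L := l.length
  calc infDist (wordEval B Y (a :: b :: l) - wordEval B Y₀ (a :: b :: l)) (lcs B ⊤ (i + 1))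
      ≤ μ * D * ‖wordEval B Y₀ (b :: l)‖ + μ * (D + Q) *
          infDist (wordEval B Y (b :: l) - wordEval B Y₀ (b :: l)) (lcs B ⊤ i) :=
        infDist_wordEval_cons_cons_sub_le_add hB hμ0 hμ a b l (hY a) (hY₀ a)
    _ ≤ μ * D * (μ ^ L * Q ^ (L + 1)) + μ * (2 * Q) * ((L + 1 : ℕ) * (2 * μ * Q) ^ L * D) := by
        gcongr
        · exact infDist_nonneg
        · linarith
    _ = (μ * Q) ^ (L + 1) * D + (L + 1 : ℕ) * (2 * μ * Q) ^ (L + 1) * D := by ring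
    _ ≤ (2 * μ * Q) ^ (L + 1) * D + (L + 1 : ℕ) * (2 * μ * Q) ^ (L + 1) * D := by
        gcongr
        nlinarith [mul_nonneg hμ0 hQ0]
    _ = (L + 1 + 1 : ℕ) * (2 * μ * Q) ^ (L + 1) * D := by push_cast; ring

lemma infDist_wordEval_sub_le (hB : B.IsAlt) (hμ0 : 0 ≤ μ)
    (hμ : ∀ x y : g, ‖B x y‖ ≤ μ * ‖x‖ * ‖y‖) (hDQ : D ≤ Q)
    (hY : ∀ a, infDist (Y a - Y₀ a) (lcs B ⊤ i) ≤ D) (hY₀ : ∀ a, ‖Y₀ a‖ ≤ Q) :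
    ∀ l : List (Fin m), infDist (wordEval B Y l - wordEval B Y₀ l) (lcs B ⊤ i) ≤
      l.length * (2 * μ * Q) ^ (l.length - 1) * D
  | [] => by simpa [wordEval] using (infDist_zero_of_mem (zero_mem (lcs B ⊤ i))).le
  | [a] => by simpa [wordEval] using hY a
  | a :: b :: l =>
    (infDist_le_infDist_of_subset (lcs_top_antitone (Nat.le_succ i)) ⟨0, zero_mem _⟩).trans
      (infDist_wordEval_cons_cons_sub_le hB hμ0 hμ hDQ hY hY₀ a b l
        (infDist_wordEval_sub_le hB hμ0 hμ hDQ hY hY₀ (b :: l)))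

lemma infDist_wordEval_sub_le_succ (hB : B.IsAlt) (hμ0 : 0 ≤ μ)
    (hμ : ∀ x y : g, ‖B x y‖ ≤ μ * ‖x‖ * ‖y‖) (hDQ : D ≤ Q)
    (hY : ∀ a, infDist (Y a - Y₀ a) (lcs B ⊤ i) ≤ D) (hY₀ : ∀ a, ‖Y₀ a‖ ≤ Q)
    {l : List (Fin m)} (hl : 2 ≤ l.length) :
    infDist (wordEval B Y l - wordEval B Y₀ l) (lcs B ⊤ (i + 1)) ≤
      l.length * (2 * μ * Q) ^ (l.length - 1) * D := by
  match l, hl with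
  | a :: b :: l, _ =>
    exact infDist_wordEval_cons_cons_sub_le hB hμ0 hμ hDQ hY hY₀ a b l
      (infDist_wordEval_sub_le hB hμ0 hμ hDQ hY hY₀ (b :: l))

end WordDifference

section ClassA

variable {g : Type*} [NormedAddCommGroup g] {n r : ℕ}

lemma norm_le_pnorm {m : ℕ} (X : Fin m → g) : ‖X‖ ≤ pnorm X :=
  (pi_norm_le_iff_of_nonneg (Finset.sum_nonneg fun _ _ => norm_nonneg _)).mpr fun j =>
    Finset.single_le_sum (f := fun i => ‖X i‖) (fun _ _ => norm_nonneg _) (Finset.mem_univ j)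

lemma pnorm_le_card_mul_norm {m : ℕ} (X : Fin m → g) : pnorm X ≤ m * ‖X‖ :=
  calc pnorm X ≤ ∑ _i : Fin m, ‖X‖ := Finset.sum_le_sum fun i _ => norm_le_pi_norm X i
    _ = m * ‖X‖ := by simp

lemma norm_letter_zero_le (W : Fin r → g) (a : Fin (n + r)) :
    ‖letter (0 : Fin n → g) W a‖ ≤ ‖W‖ := by
  unfold letter
  split_ifs
  exacts [by simp, norm_le_pi_norm W _]

variable [NormedSpace ℝ g]

lemma letter_mem {S : Submodule ℝ g} {X : Fin n → g} {W : Fin r → g} (hX : ∀ j, X j ∈ S)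
    (hW : ∀ b, W b ∈ S) (a : Fin (n + r)) : letter X W a ∈ S := by
  unfold letter
  split_ifs
  exacts [hX _, hW _]

lemma infDist_letter_sub_letter_zero_le (S : Submodule ℝ g) (X : Fin n → g) (W : Fin r → g)
    (a : Fin (n + r)) :
    infDist (letter X W a - letter 0 W a) S ≤
      infDist X (Submodule.pi Set.univ fun _ : Fin n => S : Submodule ℝ (Fin n → g)) := by
  unfold letter
  split_ifs
  · simpa using infDist_apply_le S X _
  · simpa [infDist_zero_of_mem S.zero_mem] using infDist_nonneg

variable (B : g →ₗ[ℝ] g →ₗ[ℝ] g)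

def lcsPi (n i : ℕ) : Submodule ℝ (Fin n → g) :=
  Submodule.pi Set.univ fun _ => lcs B ⊤ i

/-- The nonlinear part `Σ_{ω ∈ s} c_ω ⊗ ω` of a class-𝒜 map, truncated to the words in `s`. -/
def wordSum (c : Word (n + r) → Fin n → ℝ) (s : Finset (Word (n + r))) (X : Fin n → g)
    (W : Fin r → g) : Fin n → g :=
  fun j => ∑ ω ∈ s, c ω j • wordEval B (letter X W) ω.1

variable {B}

lemma wordSum_mem_lcsPi (c : Word (n + r) → Fin n → ℝ) (s : Finset (Word (n + r))) {i : ℕ}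
    {X : Fin n → g} {W : Fin r → g} (hX : X ∈ lcsPi B n i) (hW : ∀ b, W b ∈ lcs B ⊤ i) :
    wordSum B c s X W ∈ lcsPi B n i := fun _ _ =>
  Submodule.sum_mem _ fun _ _ => Submodule.smul_mem _ _ <|
    wordEval_mem_lcs_of_forall _ (letter_mem (fun j => hX j trivial) hW) _

lemma infDist_wordSum_sub_le [FiniteDimensional ℝ g] (hB : B.IsAlt) {μ : ℝ} (hμ0 : 0 ≤ μ)
    (hμ : ∀ x y : g, ‖B x y‖ ≤ μ * ‖x‖ * ‖y‖) (c : Word (n + r) → Fin n → ℝ)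
    (s : Finset (Word (n + r))) {i : ℕ} {X : Fin n → g} {W : Fin r → g} {D Q : ℝ}
    (hX : infDist X (lcsPi B n i) ≤ D) (hW : ‖W‖ ≤ Q) (hDQ : D ≤ Q) :
    infDist (wordSum B c s X W - wordSum B c s 0 W) (lcsPi B n (i + 1)) ≤
      (∑ ω ∈ s, ‖c ω‖ * (ω.1.length * (2 * μ * Q) ^ (ω.1.length - 1))) * D := by
  let T : Word (n + r) → g →ₗ[ℝ] Fin n → g := fun ω => LinearMap.pi fun j => c ω j • LinearMap.id
  have hT : ∀ ω, lcs B ⊤ (i + 1) ≤ (lcsPi B n (i + 1)).comap (T ω) := fun ω v hv j _ =>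
    Submodule.smul_mem _ _ hv
  have hTnorm : ∀ ω v, ‖T ω v‖ ≤ ‖c ω‖ * ‖v‖ := fun ω v =>
    (pi_norm_le_iff_of_nonneg (by positivity)).mpr fun j => by
      simpa [T, norm_smul] using mul_le_mul_of_nonneg_right (norm_le_pi_norm (c ω) j) (norm_nonneg v)
  have hdiff : wordSum B c s X W - wordSum B c s 0 W =
      ∑ ω ∈ s, T ω (wordEval B (letter X W) ω.1 - wordEval B (letter 0 W) ω.1) := by
    ext j
    simp [wordSum, T, Finset.sum_apply, Finset.sum_sub_distrib]
  rw [hdiff, Finset.sum_mul]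
  refine (infDist_sum_le (lcsPi B n (i + 1)).toAddSubgroup _ _).trans
    (Finset.sum_le_sum fun ω _ => ?_)
  refine (infDist_map_le (T ω) (hT ω) (norm_nonneg _) (hTnorm ω) _).trans ?_
  rw [mul_assoc]
  gcongr
  exact infDist_wordEval_sub_le_succ hB hμ0 hμ hDQ
    (fun a => (infDist_letter_sub_letter_zero_le _ X W a).trans hX)
    (fun a => (norm_letter_zero_le W a).trans hW) ω.2

end ClassA

theorem statement1_general
    {g : Type*} [NormedAddCommGroup g] [NormedSpace ℝ g] [FiniteDimensional ℝ g]
    -- the Lie bracket and its compatibility with the norm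
    (B : g →ₗ[ℝ] g →ₗ[ℝ] g)
    (hBalt : ∀ x : g, B x x = 0)
    (μ : ℝ) (hμpos : 0 < μ) (hμ : ∀ x y : g, ‖B x y‖ ≤ μ * ‖x‖ * ‖y‖)
    (n r : ℕ)
    -- `g` is nilpotent with nilindex `p`, i.e. `p` is least with `g^(p+1) = 0`
    (p : ℕ) (hnilp : lcs B (⊤ : Submodule ℝ g) p = ⊥)
    -- `f` belongs to class-𝒜 with linear part `A` and coefficients `c`
    (A : (Fin n → g) →L[ℝ] (Fin n → g))
    (c : Word (n + r) → Fin n → ℝ)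
    (f : (Fin n → g) → (Fin r → g) → (Fin n → g))
    (hfdef : ∀ X W j, f X W j = A X j + ∑' ω : Word (n + r), c ω j • wordEval B (letter X W) ω.1)
    -- (i) the origin is the unique equilibrium
    (heq : ∀ (W : Fin r → g) (X : Fin n → g), f X W = 0 ↔ X = 0)
    -- (ii) each `(g^(i))^n` is invariant under `f`
    (hinv : ∀ (i : ℕ) (X : Fin n → g) (W : Fin r → g),
      (∀ j, X j ∈ lcs B (⊤ : Submodule ℝ g) i) → ∀ j, f X W j ∈ lcs B (⊤ : Submodule ℝ g) i)
    -- the exogenous signal and the spectral radius condition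
    (W : ℕ → Fin r → g) (β : ℝ)
    (hW : ∀ k, pnorm (W k) ≤ β)
    (hρ : specRad A < 1) :
    -- semiglobal exponential stability of the origin
    ∀ M > 0, ∃ α : ℝ, 0 ≤ α ∧ ∃ lam : ℝ, 0 ≤ lam ∧ lam < 1 ∧
      ∀ X : ℕ → Fin n → g, (∀ k, X (k + 1) = f (X k) (W k)) →
        pnorm (X 0) ≤ M → ∀ k, pnorm (X k) ≤ α * lam ^ k * pnorm (X 0) := by
  have hfin : {ω : Word (n + r) | ω.1.length ≤ p}.Finite :=
    (List.finite_length_le _ p).preimage Subtype.val_injective.injOn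
  set F := hfin.toFinset
  have hf : ∀ X W, f X W = A X + wordSum B c F X W := fun X W => funext fun j => by
    rw [hfdef, tsum_eq_sum fun ω hω => ?_]
    · rfl
    · rw [wordEval_eq_zero_of_lt_length _ hBalt hnilp (by simpa [F] using hω), smul_zero]
  have hN0 : ∀ W, wordSum B c F 0 W = 0 := fun W => by
    simpa [hf] using (heq W 0).mpr rfl
  have hAV : ∀ i, ∀ X ∈ lcsPi B n i, A X ∈ lcsPi B n i := fun i X hX => by
    have hfX : f X 0 ∈ lcsPi B n i := fun j _ => hinv i X 0 (fun j => hX j trivial) j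
    simpa [hf] using sub_mem hfX (wordSum_mem_lcsPi c F (W := 0) hX fun _ => zero_mem _)
  have hN : ∀ i Q, 0 ≤ Q → ∃ K, 0 ≤ K ∧ ∀ X w D, infDist X (lcsPi B n i) ≤ D → D ≤ Q → ‖w‖ ≤ Q →
      infDist (wordSum B c F X w) (lcsPi B n (i + 1)) ≤ K * D := fun i Q hQ =>
    ⟨∑ ω ∈ F, ‖c ω‖ * (ω.1.length * (2 * μ * Q) ^ (ω.1.length - 1)), by positivity,
      fun X w D hX hDQ hw => by
      simpa [hN0] using infDist_wordSum_sub_le hBalt hμpos.le hμ c F hX hw hDQ⟩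
  obtain ⟨CA, hCA, lamA, hlamA, hlamA1, hA⟩ := exists_norm_pow_le_of_specRad_lt_one A hρ
  intro M hM
  obtain ⟨C, hC, lam, hlam, hlam1, hX⟩ := exists_infDist_le_geometric (by simp [lcsPi, lcs]) hAV
    hCA hlamA hlamA1 hA hN (fun k => (norm_le_pnorm (W k)).trans (hW k)) hM.le p
  refine ⟨n * C, by positivity, lam, hlam, hlam1, fun X hXf hX0 k => ?_⟩
  have hXk := hX X (fun k => by rw [hXf, hf]) ((norm_le_pnorm _).trans hX0) k
  rw [lcsPi, hnilp, Submodule.pi_univ_bot, Submodule.bot_coe, infDist_singleton,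
    dist_zero_right] at hXk
  calc pnorm (X k) ≤ n * ‖X k‖ := pnorm_le_card_mul_norm _
    _ ≤ n * (C * lam ^ k * pnorm (X 0)) := by
        gcongr
        exact hXk.trans (by gcongr; exact norm_le_pnorm _)
    _ = n * C * lam ^ k * pnorm (X 0) := by ring

/-- Nilpotent case with bounded exogenous signal and `A` Schur: the origin is
semiglobally exponentially stable. -/
theorem statement1
    {g : Type*} [NormedAddCommGroup g] [NormedSpace ℝ g] [FiniteDimensional ℝ g]
    -- the Lie bracket and its compatibility with the norm
    (B : g →ₗ[ℝ] g →ₗ[ℝ] g)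
    (hBalt : ∀ x : g, B x x = 0)
    (hBjac : ∀ x y z : g, B x (B y z) = B (B x y) z + B y (B x z))
    (μ : ℝ) (hμpos : 0 < μ) (hμ : ∀ x y : g, ‖B x y‖ ≤ μ * ‖x‖ * ‖y‖)
    (n r : ℕ) (hn : 1 ≤ n) (hr : 1 ≤ r)
    -- `g` is nilpotent with nilindex `p`, i.e. `p` is least with `g^(p+1) = 0`
    (p : ℕ) (hnilp : lcs B (⊤ : Submodule ℝ g) p = ⊥)
    (hleast : ∀ q, lcs B (⊤ : Submodule ℝ g) q = ⊥ → p ≤ q)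
    -- `f` belongs to class-𝒜 with linear part `A` and coefficients `c`
    (A : (Fin n → g) →L[ℝ] (Fin n → g))
    (c : Word (n + r) → Fin n → ℝ)
    (f : (Fin n → g) → (Fin r → g) → (Fin n → g))
    (hsum : ∀ (X : Fin n → g) (W : Fin r → g) (j : Fin n),
      Summable (fun ω : Word (n + r) => ‖c ω j • wordEval B (letter X W) ω.1‖))
    (hfdef : ∀ X W j, f X W j = A X j + ∑' ω : Word (n + r), c ω j • wordEval B (letter X W) ω.1)
    (hclassA : ∃ ε > 0, ∀ (X : Fin n → g) (W : Fin r → g), pnorm X + pnorm W < ε →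
      Summable (fun ω : Word (n + r) =>
        μ ^ (ω.1.length - 1) * ‖c ω‖ * (ω.1.map fun i => ‖letter X W i‖).prod))
    -- (i) the origin is the unique equilibrium
    (heq : ∀ (W : Fin r → g) (X : Fin n → g), f X W = 0 ↔ X = 0)
    -- (ii) each `(g^(i))^n` is invariant under `f`
    (hinv : ∀ (i : ℕ) (X : Fin n → g) (W : Fin r → g),
      (∀ j, X j ∈ lcs B (⊤ : Submodule ℝ g) i) → ∀ j, f X W j ∈ lcs B (⊤ : Submodule ℝ g) i)
    -- the exogenous signal and the spectral radius condition
    (W : ℕ → Fin r → g) (β : ℝ) (hβ : 0 ≤ β)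
    (hW : ∀ k, pnorm (W k) ≤ β)
    (hρ : specRad A < 1) :
    -- semiglobal exponential stability of the origin
    ∀ M > 0, ∃ α : ℝ, 0 ≤ α ∧ ∃ lam : ℝ, 0 ≤ lam ∧ lam < 1 ∧
      ∀ X : ℕ → Fin n → g, (∀ k, X (k + 1) = f (X k) (W k)) →
        pnorm (X 0) ≤ M → ∀ k, pnorm (X k) ≤ α * lam ^ k * pnorm (X 0) :=
  statement1_general B hBalt μ hμpos hμ n r p hnilp A c f hfdef heq hinv W β hW hρ
end

section
/- Let h ⊆ g be an ideal and let f : 𝒳 × 𝒲 → 𝒳 be given by a pointwise absolutely convergent word series f(X,W) = AX + Σ_{|ω| ≥ 2} c_ω ⊗ ω in which every word has at least one letter among X_1,…,X_n. Then for every i ≥ 1: f((h^(i))^n × 𝒲) ⊆ (h^(i))^n if and only if (h^(i))^n is invariant under the linear map A, i.e. A·(h^(i))^n ⊆ (h^(i))^n. -/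
/-!
Every term `h^(i)` of the lower central series of an ideal is again an ideal (Jacobi identity),
and it is closed since `g` is finite-dimensional. By antisymmetry, a right-nested bracket
lies in any ideal containing one of its letters, so when `X ∈ (h^(i))^n` every word with an
`X`-letter lies in `h^(i)`, and so does the (possibly infinite) sum of the series. Hence `f(X, W)`
and `AX` differ by an element of `(h^(i))^n`, and one of them lies in `(h^(i))^n` iff the other
does; for the direction `f ⇒ A` take `W = 0`.
-/

open scoped BigOperators

section WordSeries

variable {g : Type*} [AddCommGroup g] [Module ℝ g] (B : g →ₗ[ℝ] g →ₗ[ℝ] g)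

lemma bracket_eq_neg_swap (hBalt : ∀ x : g, B x x = 0) (x y : g) : B x y = -B y x := by
  have hxy := hBalt (x + y)
  simp only [map_add, LinearMap.add_apply, hBalt x, hBalt y, add_zero, zero_add] at hxy
  exact eq_neg_of_add_eq_zero_right hxy

lemma bracket_mem_lcs (hBjac : ∀ x y z : g, B x (B y z) = B (B x y) z + B y (B x z))
    (h : Submodule ℝ g) (hIdeal : ∀ (x : g), ∀ y ∈ h, B x y ∈ h) (i : ℕ) :
    ∀ (x : g), ∀ y ∈ lcs B h i, B x y ∈ lcs B h i := by
  induction i with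
  | zero => exact hIdeal
  | succ i ih =>
    intro x y hy
    induction hy using Submodule.span_induction with
    | mem z hz =>
      obtain ⟨a, ha, b, hb, rfl⟩ := hz
      rw [hBjac]
      exact add_mem (Submodule.subset_span ⟨B x a, ih x a ha, b, hb, rfl⟩)
        (Submodule.subset_span ⟨a, ha, B x b, hIdeal x b hb, rfl⟩)
    | zero => simp
    | add _ _ _ _ ha hb => rw [map_add]; exact add_mem ha hb
    | smul t _ _ ha => rw [map_smul]; exact Submodule.smul_mem _ t ha

lemma wordEval_mem_of_mem (hBalt : ∀ x : g, B x x = 0) {S : Submodule ℝ g}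
    (hS : ∀ (x : g), ∀ y ∈ S, B x y ∈ S) {m : ℕ} (Y : Fin m → g) {k : Fin m} (hk : Y k ∈ S) :
    ∀ {l : List (Fin m)}, k ∈ l → wordEval B Y l ∈ S
  | [_], hl => by rwa [List.mem_singleton.mp hl] at hk
  | a :: b :: l, hl => by
    rcases List.mem_cons.mp hl with rfl | hl
    · rw [wordEval, bracket_eq_neg_swap B hBalt]
      exact S.neg_mem (hS _ _ hk)
    · exact hS _ _ (wordEval_mem_of_mem hBalt hS Y hk hl)

lemma tsum_smul_wordEval_mem [TopologicalSpace g] (hBalt : ∀ x : g, B x x = 0)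
    {S : Submodule ℝ g} (hS : ∀ (x : g), ∀ y ∈ S, B x y ∈ S) (hSclosed : IsClosed (S : Set g))
    {n r : ℕ} (c : Word (n + r) → ℝ) (hX : ∀ ω : Word (n + r), (∀ i ∈ ω.1, n ≤ (i : ℕ)) → c ω = 0)
    {X : Fin n → g} (hXS : ∀ j, X j ∈ S) (W : Fin r → g) :
    ∑' ω : Word (n + r), c ω • wordEval B (letter X W) ω.1 ∈ S := by
  refine tsum_mem hSclosed fun ω => ?_
  by_cases hω : ∀ i ∈ ω.1, n ≤ (i : ℕ)
  · simp [hX ω hω]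
  · push Not at hω
    obtain ⟨k, hkω, hkn⟩ := hω
    have hk : letter X W k ∈ S := by simpa [letter, hkn] using hXS ⟨k, hkn⟩
    exact S.smul_mem _ (wordEval_mem_of_mem B hBalt hS _ hk hkω)

end WordSeries

theorem statement9_general
    {g : Type*} [NormedAddCommGroup g] [NormedSpace ℝ g] [FiniteDimensional ℝ g]
    (B : g →ₗ[ℝ] g →ₗ[ℝ] g)
    (hBalt : ∀ x : g, B x x = 0)
    (hBjac : ∀ x y z : g, B x (B y z) = B (B x y) z + B y (B x z))
    (n r : ℕ)
    -- `h` is an ideal of `g`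
    (h : Submodule ℝ g)
    (hIdeal : ∀ (x : g), ∀ y ∈ h, B x y ∈ h)
    -- `f` is given by a pointwise absolutely convergent word series
    (A : (Fin n → g) →L[ℝ] (Fin n → g))
    (c : Word (n + r) → Fin n → ℝ)
    (f : (Fin n → g) → (Fin r → g) → (Fin n → g))
    (hfdef : ∀ X W j, f X W j = A X j + ∑' ω : Word (n + r), c ω j • wordEval B (letter X W) ω.1)
    -- every word occurring in the series has at least one letter among `X₁, …, X_n`
    (hX : ∀ ω : Word (n + r), (∀ i ∈ ω.1, n ≤ (i : ℕ)) → c ω = 0) :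
    ∀ i : ℕ,
      ((∀ (X : Fin n → g) (W : Fin r → g),
          (∀ j, X j ∈ lcs B h i) → ∀ j, f X W j ∈ lcs B h i) ↔
        (∀ X : Fin n → g, (∀ j, X j ∈ lcs B h i) → ∀ j, A X j ∈ lcs B h i)) := by
  intro i
  have htail : ∀ (X : Fin n → g) (W : Fin r → g), (∀ j, X j ∈ lcs B h i) → ∀ j,
      ∑' ω : Word (n + r), c ω j • wordEval B (letter X W) ω.1 ∈ lcs B h i :=
    fun X W hXS j => tsum_smul_wordEval_mem B hBalt (bracket_mem_lcs B hBjac h hIdeal i)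
      (lcs B h i).closed_of_finiteDimensional (fun ω => c ω j)
      (fun ω hω => congrFun (hX ω hω) j) hXS W
  constructor
  · intro hf X hXS j
    have hA := sub_mem (hf X 0 hXS j) (htail X 0 hXS j)
    rwa [hfdef, add_sub_cancel_right] at hA
  · intro hA X W hXS j
    rw [hfdef]
    exact add_mem (hA X hXS j) (htail X W hXS j)

/-- For an ideal `h ⊆ g` and `f` a pointwise absolutely convergent word
series `f(X,W) = AX + Σ c_ω ⊗ ω` in which every word has at least one letter among the `X`'s:
for every `i ≥ 1`, `(h^(i))^n` is invariant under `f` iff it is invariant under `A`.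
(Here `lcs B h i = h^(i+1)`, so quantifying over all `i : ℕ` covers all `i ≥ 1`.) -/
theorem statement9
    {g : Type*} [NormedAddCommGroup g] [NormedSpace ℝ g] [FiniteDimensional ℝ g]
    (B : g →ₗ[ℝ] g →ₗ[ℝ] g)
    (hBalt : ∀ x : g, B x x = 0)
    (hBjac : ∀ x y z : g, B x (B y z) = B (B x y) z + B y (B x z))
    (μ : ℝ) (hμpos : 0 < μ) (hμ : ∀ x y : g, ‖B x y‖ ≤ μ * ‖x‖ * ‖y‖)
    (n r : ℕ) (hn : 1 ≤ n) (hr : 1 ≤ r)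
    -- `h` is an ideal of `g`
    (h : Submodule ℝ g)
    (hIdeal : ∀ (x : g), ∀ y ∈ h, B x y ∈ h)
    -- `f` is given by a pointwise absolutely convergent word series
    (A : (Fin n → g) →L[ℝ] (Fin n → g))
    (c : Word (n + r) → Fin n → ℝ)
    (f : (Fin n → g) → (Fin r → g) → (Fin n → g))
    (hsum : ∀ (X : Fin n → g) (W : Fin r → g) (j : Fin n),
      Summable (fun ω : Word (n + r) => ‖c ω j • wordEval B (letter X W) ω.1‖))
    (hfdef : ∀ X W j, f X W j = A X j + ∑' ω : Word (n + r), c ω j • wordEval B (letter X W) ω.1)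
    -- every word occurring in the series has at least one letter among `X₁, …, X_n`
    (hX : ∀ ω : Word (n + r), (∀ i ∈ ω.1, n ≤ (i : ℕ)) → c ω = 0) :
    ∀ i : ℕ,
      ((∀ (X : Fin n → g) (W : Fin r → g),
          (∀ j, X j ∈ lcs B h i) → ∀ j, f X W j ∈ lcs B h i) ↔
        (∀ X : Fin n → g, (∀ j, X j ∈ lcs B h i) → ∀ j, A X j ∈ lcs B h i)) :=
  statement9_general B hBalt hBjac n r h hIdeal A c f hfdef hX
end

section
/- Let f : 𝒳 × 𝒲 → 𝒳 belong to class-𝒜 with linear part A and with every word having at least one letter among X_1,…,X_n, and let 𝔳 ⊆ g be an ideal such that 𝔳^n ⊆ 𝒳 is invariant under A. Let P : g → g/𝔳 denote the canonical projection onto the quotient Lie algebra. Then there exists a unique map f̄ : (g/𝔳)^n × (g/𝔳)^r → (g/𝔳)^n such that f̄(P·X, P·W) = P·f(X,W) for all (X,W) ∈ 𝒳 × 𝒲 (where P is applied componentwise); moreover f̄ is given by f̄(X̄,W̄) = Ā·X̄ + Σ_ω c_ω ⊗ ω̄, where Ā is the map induced by A on (g/𝔳)^n and ω̄ is the word ω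 evaluated with the quotient brackets on the projected letters, and f̄ again satisfies the class-𝒜 convergence bound on a neighborhood of the origin and f̄(0,W̄) = 0 for all W̄. -/
open scoped BigOperators

/-! The projection `P : g → g ⧸ 𝔳` is a continuous linear map intertwining the two brackets, so
it carries every word `ω(X, W)` to `ω(P X, P W)` and commutes with the convergent series defining
`f`; invariance of `𝔳ⁿ` under `A` makes `A` descend as well. Since `P` is surjective this pins down
`f̄` and gives its formula. The quotient norm does not increase norms and every class in `g ⧸ 𝔳`
has a lift of almost the same norm, so the class-𝒜 majorant of `f̄` at `(X̄, W̄)` is dominated by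
that of `f` at a lift of almost the same size. Finally, every word contains some `X`-letter and
therefore vanishes at `X̄ = 0`. -/

theorem letter_comp {g g' : Type*} (P : g → g') {n r : ℕ} (X : Fin n → g) (W : Fin r → g)
    (j : Fin (n + r)) :
    letter (fun i => P (X i)) (fun i => P (W i)) j = P (letter X W j) := by
  unfold letter
  split <;> rfl

theorem letter_zero_of_lt {g : Type*} [Zero g] {n r : ℕ} (W : Fin r → g) {j : Fin (n + r)}
    (hj : (j : ℕ) < n) : letter (0 : Fin n → g) W j = 0 := by
  rw [letter, dif_pos hj, Pi.zero_apply]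

section Words

variable {g g' : Type*} [AddCommGroup g] [Module ℝ g] [AddCommGroup g'] [Module ℝ g']

theorem wordEval_map (B : g →ₗ[ℝ] g →ₗ[ℝ] g) (B' : g' →ₗ[ℝ] g' →ₗ[ℝ] g') (P : g →ₗ[ℝ] g')
    (hP : ∀ x y, B' (P x) (P y) = P (B x y)) {m : ℕ} (Y : Fin m → g) :
    ∀ l : List (Fin m), wordEval B' (fun i => P (Y i)) l = P (wordEval B Y l)
  | [] => (map_zero P).symm
  | [_] => rfl
  | i :: j :: l => by
    simp only [wordEval, wordEval_map B B' P hP Y (j :: l), hP]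

theorem wordEval_eq_zero_of_mem (B : g →ₗ[ℝ] g →ₗ[ℝ] g) {m : ℕ} (Y : Fin m → g) {k : Fin m}
    (hk : Y k = 0) : ∀ {l : List (Fin m)}, k ∈ l → wordEval B Y l = 0
  | [], h => absurd h List.not_mem_nil
  | [_], h => by rw [List.mem_singleton.mp h] at hk; exact hk
  | i :: j :: l, h => by
    rcases List.mem_cons.mp h with rfl | h
    · simp [wordEval, hk]
    · simp [wordEval, wordEval_eq_zero_of_mem B Y hk h]

theorem smul_wordEval_letter_zero (B : g →ₗ[ℝ] g →ₗ[ℝ] g) {n r : ℕ}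
    (c : Word (n + r) → ℝ) (hc : ∀ ω : Word (n + r), (∀ i ∈ ω.1, n ≤ (i : ℕ)) → c ω = 0)
    (W : Fin r → g) (ω : Word (n + r)) :
    c ω • wordEval B (letter 0 W) ω.1 = 0 := by
  by_cases hω : ∀ i ∈ ω.1, n ≤ (i : ℕ)
  · rw [hc ω hω, zero_smul]
  · push Not at hω
    obtain ⟨i, hi, hin⟩ := hω
    rw [wordEval_eq_zero_of_mem B _ (letter_zero_of_lt W hin) hi, smul_zero]

end Words

namespace Submodule

variable {R M : Type*} [CommRing R] [AddCommGroup M] [Module R M] (p : Submodule R M)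

def piQuotientMap {ι : Type*} [Fintype ι] [DecidableEq ι] (A : (ι → M) →ₗ[R] (ι → M))
    (hA : ∀ X : ι → M, (∀ i, X i ∈ p) → ∀ i, A X i ∈ p) : (ι → M ⧸ p) →ₗ[R] (ι → M ⧸ p) :=
  (quotientPi fun _ => p).toLinearMap ∘ₗ
    (pi Set.univ fun _ => p).mapQ _ A (fun X hX => mem_pi.mpr fun i _ =>
      hA X (fun j => mem_pi.mp hX j (Set.mem_univ j)) i) ∘ₗ
    (quotientPi fun _ => p).symm.toLinearMap

theorem piQuotientMap_mk {ι : Type*} [Fintype ι] [DecidableEq ι] (A : (ι → M) →ₗ[R] (ι → M))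
    (hA : ∀ X : ι → M, (∀ i, X i ∈ p) → ∀ i, A X i ∈ p) (X : ι → M) :
    p.piQuotientMap A hA (fun i => p.mkQ (X i)) = fun i => p.mkQ (A X i) := by
  have hX : (quotientPi fun _ => p).symm (fun i => p.mkQ (X i)) = Quotient.mk X :=
    (LinearEquiv.symm_apply_eq _).mpr rfl
  simp only [piQuotientMap, LinearMap.comp_apply, LinearEquiv.coe_coe, hX, mapQ_apply]
  rfl

theorem funext_comp_mkQ₂ {ι κ γ : Type*} {F G : (ι → M ⧸ p) → (κ → M ⧸ p) → γ}
    (h : ∀ (X : ι → M) (W : κ → M),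
      F (fun i => p.mkQ (X i)) (fun i => p.mkQ (W i))
        = G (fun i => p.mkQ (X i)) (fun i => p.mkQ (W i))) :
    F = G := by
  funext Xb Wb
  obtain ⟨X, rfl⟩ := p.mkQ_surjective.comp_left Xb
  obtain ⟨W, rfl⟩ := p.mkQ_surjective.comp_left Wb
  exact h X W

end Submodule

def classAMajorant {E V : Type*} [Norm E] [Norm V] {n r : ℕ} (μ : ℝ) (c : Word (n + r) → V)
    (X : Fin n → E) (W : Fin r → E) (ω : Word (n + r)) : ℝ :=
  μ ^ (ω.1.length - 1) * ‖c ω‖ * (ω.1.map fun i => ‖letter X W i‖).prod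

section Quotient

variable {g : Type*} [SeminormedAddCommGroup g] [NormedSpace ℝ g] (𝔳 : Submodule ℝ g)

theorem mkQ_tsum_smul_wordEval [IsClosed (𝔳 : Set g)] (B : g →ₗ[ℝ] g →ₗ[ℝ] g)
    (Bq : (g ⧸ 𝔳) →ₗ[ℝ] (g ⧸ 𝔳) →ₗ[ℝ] (g ⧸ 𝔳))
    (hBq : ∀ x y : g, Bq (𝔳.mkQ x) (𝔳.mkQ y) = 𝔳.mkQ (B x y)) {m : ℕ} (Y : Fin m → g)
    (c : Word m → ℝ) (hs : Summable fun ω : Word m => c ω • wordEval B Y ω.1) :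
    𝔳.mkQ (∑' ω : Word m, c ω • wordEval B Y ω.1)
      = ∑' ω : Word m, c ω • wordEval Bq (fun i => 𝔳.mkQ (Y i)) ω.1 := by
  rw [← 𝔳.mkQL_apply, 𝔳.mkQL.map_tsum hs]
  refine tsum_congr fun ω => ?_
  rw [map_smul, Submodule.mkQL_apply, wordEval_map B Bq 𝔳.mkQ hBq]

theorem exists_lift_sum_norm_lt {ι : Type*} [Fintype ι] (Xb : ι → g ⧸ 𝔳) {δ : ℝ} (hδ : 0 < δ) :
    ∃ X : ι → g, (fun i => 𝔳.mkQ (X i)) = Xb ∧ ∑ i, ‖X i‖ < ∑ i, ‖Xb i‖ + δ := by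
  set δ' := δ / (Fintype.card ι + 1)
  have hδ' : 0 < δ' := by positivity
  choose X hXmk hXnorm using fun i => Submodule.Quotient.norm_mk_lt (Xb i) hδ'
  refine ⟨X, funext hXmk, ?_⟩
  calc ∑ i, ‖X i‖ ≤ ∑ i, (‖Xb i‖ + δ') := Finset.sum_le_sum fun i _ => (hXnorm i).le
    _ = ∑ i, ‖Xb i‖ + Fintype.card ι * δ' := by
      rw [Finset.sum_add_distrib, Finset.sum_const, nsmul_eq_mul, Finset.card_univ]
    _ < ∑ i, ‖Xb i‖ + δ := by
      have : (Fintype.card ι : ℝ) * δ' < δ := by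
        rw [mul_div_assoc', div_lt_iff₀ (by positivity)]
        nlinarith
      linarith

theorem abs_classAMajorant_mkQ_le {V : Type*} [Norm V] {n r : ℕ} (μ : ℝ) (c : Word (n + r) → V)
    (X : Fin n → g) (W : Fin r → g) (ω : Word (n + r)) :
    |classAMajorant μ c (fun j => 𝔳.mkQ (X j)) (fun j => 𝔳.mkQ (W j)) ω|
      ≤ |classAMajorant μ c X W ω| := by
  have hprod : (ω.1.map fun i => ‖letter (fun j => 𝔳.mkQ (X j)) (fun j => 𝔳.mkQ (W j)) i‖).prod
      ≤ (ω.1.map fun i => ‖letter X W i‖).prod :=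
    List.prod_map_le_prod_map₀ _ _ (fun _ _ => norm_nonneg _) fun i _ => by
      rw [letter_comp]
      exact Submodule.Quotient.norm_mk_le _ _
  simp only [classAMajorant, abs_mul]
  gcongr
  refine List.prod_nonneg fun _ hx => ?_
  obtain ⟨_, _, rfl⟩ := List.mem_map.mp hx
  exact norm_nonneg _

theorem summable_classAMajorant_mkQ {V : Type*} [Norm V] {n r : ℕ} {μ ε : ℝ}
    (c : Word (n + r) → V)
    (h : ∀ (X : Fin n → g) (W : Fin r → g), ∑ j, ‖X j‖ + ∑ j, ‖W j‖ < ε →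
      Summable (classAMajorant μ c X W))
    (Xb : Fin n → g ⧸ 𝔳) (Wb : Fin r → g ⧸ 𝔳) (hXW : ∑ j, ‖Xb j‖ + ∑ j, ‖Wb j‖ < ε) :
    Summable (classAMajorant μ c Xb Wb) := by
  have hδ : 0 < (ε - (∑ j, ‖Xb j‖ + ∑ j, ‖Wb j‖)) / 2 := by linarith
  obtain ⟨X, rfl, hX⟩ := exists_lift_sum_norm_lt 𝔳 Xb hδ
  obtain ⟨W, rfl, hW⟩ := exists_lift_sum_norm_lt 𝔳 Wb hδ
  exact (h X W (by linarith)).abs.of_norm_bounded fun ω =>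
    (Real.norm_eq_abs _).trans_le (abs_classAMajorant_mkQ_le 𝔳 μ c X W ω)

end Quotient

theorem statement10_general
    {g : Type*} [NormedAddCommGroup g] [NormedSpace ℝ g] [FiniteDimensional ℝ g]
    (B : g →ₗ[ℝ] g →ₗ[ℝ] g)
    (μ : ℝ)
    (n r : ℕ)
    (𝔳 : Submodule ℝ g)
    -- the quotient Lie bracket on `g ⧸ 𝔳`
    (Bq : (g ⧸ 𝔳) →ₗ[ℝ] (g ⧸ 𝔳) →ₗ[ℝ] (g ⧸ 𝔳))
    (hBq : ∀ x y : g, Bq (𝔳.mkQ x) (𝔳.mkQ y) = 𝔳.mkQ (B x y))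
    -- `f` belongs to class-𝒜 with linear part `A` and coefficients `c`
    (A : (Fin n → g) →L[ℝ] (Fin n → g))
    (c : Word (n + r) → Fin n → ℝ)
    (f : (Fin n → g) → (Fin r → g) → (Fin n → g))
    (hsum : ∀ (X : Fin n → g) (W : Fin r → g) (j : Fin n),
      Summable (fun ω : Word (n + r) => ‖c ω j • wordEval B (letter X W) ω.1‖))
    (hfdef : ∀ X W j, f X W j = A X j + ∑' ω : Word (n + r), c ω j • wordEval B (letter X W) ω.1)
    (hclassA : ∃ ε > 0, ∀ (X : Fin n → g) (W : Fin r → g), pnorm X + pnorm W < ε →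
      Summable (fun ω : Word (n + r) =>
        μ ^ (ω.1.length - 1) * ‖c ω‖ * (ω.1.map fun i => ‖letter X W i‖).prod))
    -- every word occurring in the series has at least one letter among `X₁, …, X_n`
    (hX : ∀ ω : Word (n + r), (∀ i ∈ ω.1, n ≤ (i : ℕ)) → c ω = 0)
    -- `𝔳^n` is invariant under `A`
    (hinvA : ∀ X : Fin n → g, (∀ j, X j ∈ 𝔳) → ∀ j, A X j ∈ 𝔳) :
    -- there is a unique `f̄` commuting with the componentwise canonical projection …
    (∃! fbar : (Fin n → g ⧸ 𝔳) → (Fin r → g ⧸ 𝔳) → (Fin n → g ⧸ 𝔳),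
      ∀ (X : Fin n → g) (W : Fin r → g),
        fbar (fun j => 𝔳.mkQ (X j)) (fun j => 𝔳.mkQ (W j)) = fun j => 𝔳.mkQ (f X W j)) ∧
    -- … and any such `f̄` has the stated properties
    (∀ fbar : (Fin n → g ⧸ 𝔳) → (Fin r → g ⧸ 𝔳) → (Fin n → g ⧸ 𝔳),
      (∀ (X : Fin n → g) (W : Fin r → g),
        fbar (fun j => 𝔳.mkQ (X j)) (fun j => 𝔳.mkQ (W j)) = fun j => 𝔳.mkQ (f X W j)) →
      ∃ Abar : (Fin n → g ⧸ 𝔳) →ₗ[ℝ] (Fin n → g ⧸ 𝔳),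
        -- `Ā` is the map induced by `A` on the quotient
        (∀ X : Fin n → g, Abar (fun j => 𝔳.mkQ (X j)) = fun j => 𝔳.mkQ (A X j)) ∧
        -- `f̄(X̄, W̄) = Ā X̄ + Σ c_ω ⊗ ω̄` with quotient brackets
        (∀ (Xb : Fin n → g ⧸ 𝔳) (Wb : Fin r → g ⧸ 𝔳) (j : Fin n),
          fbar Xb Wb j = Abar Xb j
            + ∑' ω : Word (n + r), c ω j • wordEval Bq (letter Xb Wb) ω.1) ∧
        -- `f̄` satisfies the class-𝒜 bound in the quotient norm near the origin
        (∃ ε > 0, ∀ (Xb : Fin n → g ⧸ 𝔳) (Wb : Fin r → g ⧸ 𝔳),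
          (∑ j, ‖Xb j‖) + (∑ j, ‖Wb j‖) < ε →
          Summable (fun ω : Word (n + r) =>
            μ ^ (ω.1.length - 1) * ‖c ω‖ * (ω.1.map fun i => ‖letter Xb Wb i‖).prod)) ∧
        -- `f̄(0, W̄) = 0`
        (∀ Wb : Fin r → g ⧸ 𝔳, fbar 0 Wb = 0)) := by
  have : CompleteSpace g := FiniteDimensional.complete ℝ g
  have : IsClosed (𝔳 : Set g) := Submodule.closed_of_finiteDimensional 𝔳
  set Abar := 𝔳.piQuotientMap A.toLinearMap hinvA
  have hAbar : ∀ X : Fin n → g, Abar (fun j => 𝔳.mkQ (X j)) = fun j => 𝔳.mkQ (A X j) :=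
    𝔳.piQuotientMap_mk A.toLinearMap hinvA
  set fbar₀ : (Fin n → g ⧸ 𝔳) → (Fin r → g ⧸ 𝔳) → (Fin n → g ⧸ 𝔳) :=
    fun Xb Wb j => Abar Xb j + ∑' ω : Word (n + r), c ω j • wordEval Bq (letter Xb Wb) ω.1
  have hf₀ : ∀ (X : Fin n → g) (W : Fin r → g),
      fbar₀ (fun j => 𝔳.mkQ (X j)) (fun j => 𝔳.mkQ (W j)) = fun j => 𝔳.mkQ (f X W j) := by
    intro X W
    funext j
    simp only [fbar₀, hfdef, map_add, hAbar, funext (letter_comp 𝔳.mkQ X W),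
      mkQ_tsum_smul_wordEval 𝔳 B Bq hBq _ _ (hsum X W j).of_norm]
  refine ⟨⟨fbar₀, hf₀, fun fbar hfbar =>
    𝔳.funext_comp_mkQ₂ fun X W => (hfbar X W).trans (hf₀ X W).symm⟩, fun fbar hfbar => ?_⟩
  obtain rfl : fbar = fbar₀ := 𝔳.funext_comp_mkQ₂ fun X W => (hfbar X W).trans (hf₀ X W).symm
  obtain ⟨ε, hε, hbound⟩ := hclassA
  refine ⟨Abar, hAbar, fun _ _ _ => rfl,
    ⟨ε, hε, summable_classAMajorant_mkQ 𝔳 c hbound⟩, fun Wb => funext fun j => ?_⟩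
  simp [fbar₀, smul_wordEval_letter_zero Bq (fun ω => c ω j) (fun ω h => by simp [hX ω h])]

/-- Quotient dynamics: for a class-𝒜 map `f` (all words having an `X`-letter)
and an ideal `𝔳` with `𝔳^n` invariant under `A`, there is a unique map `f̄` on the quotient
commuting with the componentwise canonical projection; it is given by `Ā X̄ + Σ c_ω ⊗ ω̄`
(brackets taken in `g ⧸ 𝔳`), satisfies the class-𝒜 bound in the quotient norm near the origin,
and kills the origin: `f̄(0, W̄) = 0`. Here `Bq` is the quotient bracket. -/
theorem statement10
    {g : Type*} [NormedAddCommGroup g] [NormedSpace ℝ g] [FiniteDimensional ℝ g]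
    (B : g →ₗ[ℝ] g →ₗ[ℝ] g)
    (hBalt : ∀ x : g, B x x = 0)
    (hBjac : ∀ x y z : g, B x (B y z) = B (B x y) z + B y (B x z))
    (μ : ℝ) (hμpos : 0 < μ) (hμ : ∀ x y : g, ‖B x y‖ ≤ μ * ‖x‖ * ‖y‖)
    (n r : ℕ) (hn : 1 ≤ n) (hr : 1 ≤ r)
    -- `𝔳` is an ideal of `g`
    (𝔳 : Submodule ℝ g)
    (hIdeal : ∀ (x : g), ∀ y ∈ 𝔳, B x y ∈ 𝔳)
    -- the quotient Lie bracket on `g ⧸ 𝔳`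
    (Bq : (g ⧸ 𝔳) →ₗ[ℝ] (g ⧸ 𝔳) →ₗ[ℝ] (g ⧸ 𝔳))
    (hBq : ∀ x y : g, Bq (𝔳.mkQ x) (𝔳.mkQ y) = 𝔳.mkQ (B x y))
    -- `f` belongs to class-𝒜 with linear part `A` and coefficients `c`
    (A : (Fin n → g) →L[ℝ] (Fin n → g))
    (c : Word (n + r) → Fin n → ℝ)
    (f : (Fin n → g) → (Fin r → g) → (Fin n → g))
    (hsum : ∀ (X : Fin n → g) (W : Fin r → g) (j : Fin n),
      Summable (fun ω : Word (n + r) => ‖c ω j • wordEval B (letter X W) ω.1‖))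
    (hfdef : ∀ X W j, f X W j = A X j + ∑' ω : Word (n + r), c ω j • wordEval B (letter X W) ω.1)
    (hclassA : ∃ ε > 0, ∀ (X : Fin n → g) (W : Fin r → g), pnorm X + pnorm W < ε →
      Summable (fun ω : Word (n + r) =>
        μ ^ (ω.1.length - 1) * ‖c ω‖ * (ω.1.map fun i => ‖letter X W i‖).prod))
    -- every word occurring in the series has at least one letter among `X₁, …, X_n`
    (hX : ∀ ω : Word (n + r), (∀ i ∈ ω.1, n ≤ (i : ℕ)) → c ω = 0)
    -- `𝔳^n` is invariant under `A`
    (hinvA : ∀ X : Fin n → g, (∀ j, X j ∈ 𝔳) → ∀ j, A X j ∈ 𝔳) :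
    -- there is a unique `f̄` commuting with the componentwise canonical projection …
    (∃! fbar : (Fin n → g ⧸ 𝔳) → (Fin r → g ⧸ 𝔳) → (Fin n → g ⧸ 𝔳),
      ∀ (X : Fin n → g) (W : Fin r → g),
        fbar (fun j => 𝔳.mkQ (X j)) (fun j => 𝔳.mkQ (W j)) = fun j => 𝔳.mkQ (f X W j)) ∧
    -- … and any such `f̄` has the stated properties
    (∀ fbar : (Fin n → g ⧸ 𝔳) → (Fin r → g ⧸ 𝔳) → (Fin n → g ⧸ 𝔳),
      (∀ (X : Fin n → g) (W : Fin r → g),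
        fbar (fun j => 𝔳.mkQ (X j)) (fun j => 𝔳.mkQ (W j)) = fun j => 𝔳.mkQ (f X W j)) →
      ∃ Abar : (Fin n → g ⧸ 𝔳) →ₗ[ℝ] (Fin n → g ⧸ 𝔳),
        -- `Ā` is the map induced by `A` on the quotient
        (∀ X : Fin n → g, Abar (fun j => 𝔳.mkQ (X j)) = fun j => 𝔳.mkQ (A X j)) ∧
        -- `f̄(X̄, W̄) = Ā X̄ + Σ c_ω ⊗ ω̄` with quotient brackets
        (∀ (Xb : Fin n → g ⧸ 𝔳) (Wb : Fin r → g ⧸ 𝔳) (j : Fin n),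
          fbar Xb Wb j = Abar Xb j
            + ∑' ω : Word (n + r), c ω j • wordEval Bq (letter Xb Wb) ω.1) ∧
        -- `f̄` satisfies the class-𝒜 bound in the quotient norm near the origin
        (∃ ε > 0, ∀ (Xb : Fin n → g ⧸ 𝔳) (Wb : Fin r → g ⧸ 𝔳),
          (∑ j, ‖Xb j‖) + (∑ j, ‖Wb j‖) < ε →
          Summable (fun ω : Word (n + r) =>
            μ ^ (ω.1.length - 1) * ‖c ω‖ * (ω.1.map fun i => ‖letter Xb Wb i‖).prod)) ∧
        -- `f̄(0, W̄) = 0`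
        (∀ Wb : Fin r → g ⧸ 𝔳, fbar 0 Wb = 0)) :=
  statement10_general B μ n r 𝔳 Bq hBq A c f hsum hfdef hclassA hX hinvA
end
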